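/- arXiv:2104.12508 — 4 statements merged into one kernel-verified Lean document; each statement's English description precedes it below -/
import Mathlib

section
/- Every recognizable relation R ⊆ Σ* × Γ* with nonempty components has a uniformization by a recognizable relation; more precisely, if R = ⋃_{i=1}^n U_i × V_i with the U_i pairwise disjoint and each V_i nonempty, and v_i ∈ V_i is chosen for each i, then R_f = ⋃_{i=1}^n U_i × {v_i} is a uniformization of R, i.e., R_f ⊆ R, dom(R_f) = dom(R), and R_f is functional. -/
open List

/-- A language is regular. -/
def IsReg {α : Type} (L : Set (List α)) : Prop := Language.IsRegular L

/-- Erase output letters: keep the Σ-part of a synchronization word. -/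
def piIn {σ γ : Type} (w : List (σ ⊕ γ)) : List σ := w.filterMap Sum.getLeft?
/-- Erase input letters: keep the Γ-part of a synchronization word. -/
def piOut {σ γ : Type} (w : List (σ ⊕ γ)) : List γ := w.filterMap Sum.getRight?
/-- `⟦w⟧`, the pair synchronized by `w`. -/
def syncPair {σ γ : Type} (w : List (σ ⊕ γ)) : List σ × List γ := (piIn w, piOut w)
/-- `⟦L⟧`, the relation defined by a synchronization language. -/
def syncRel {σ γ : Type} (L : Set (List (σ ⊕ γ))) : Set (List σ × List γ) := syncPair '' L

def rdom {σ γ : Type} (R : Set (List σ × List γ)) : Set (List σ) := {u | ∃ v, (u, v) ∈ R}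

/-- A recognizable relation: a finite union of products of regular languages. -/
def Recognizable {σ γ : Type} (R : Set (List σ × List γ)) : Prop :=
  ∃ (n : ℕ) (U : Fin n → Set (List σ)) (V : Fin n → Set (List γ)),
    (∀ i, IsReg (U i) ∧ IsReg (V i)) ∧
    R = ⋃ i, {p : List σ × List γ | p.1 ∈ U i ∧ p.2 ∈ V i}

/-- lag of the (1-based) position `i` of `w`. -/
def lagAt {σ γ : Type} (w : List (σ ⊕ γ)) (i : ℕ) : ℕ :=
  ((((w.take i).countP Sum.isLeft : ℕ) : ℤ) - (((w.take i).countP Sum.isRight : ℕ) : ℤ)).natAbs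

/-- maximal lag of a position of `w`. -/
def lagW {σ γ : Type} (w : List (σ ⊕ γ)) : ℕ := (Finset.range (w.length + 1)).sup (lagAt w)

/-- number of shifts of `w`. -/
def shiftCount {σ γ : Type} (w : List (σ ⊕ γ)) : ℕ :=
  (w.zip w.tail).countP fun p => p.1.isLeft != p.2.isLeft

/-- the (0-based) list of shift positions of `w`, in increasing order. -/
def shiftList {σ γ : Type} (w : List (σ ⊕ γ)) : List ℕ :=
  (List.range w.length).filter fun j =>
    decide (j + 1 < w.length) &&
      decide ((w[j]?).map Sum.isLeft ≠ (w[j + 1]?).map Sum.isLeft)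

/-- shiftlag of `w`: the largest `n` such that `w` has `n` consecutive shifts that are all
`≥n`-lagged. -/
noncomputable def shiftlagW {σ γ : Type} (w : List (σ ⊕ γ)) : ℕ :=
  sSup {n : ℕ | ∃ l : List ℕ, l <:+: shiftList w ∧ l.length = n ∧ ∀ j ∈ l, n ≤ lagAt w (j + 1)}

def FiniteShift {σ γ : Type} (L : Set (List (σ ⊕ γ))) : Prop := ∃ k, ∀ w ∈ L, shiftCount w ≤ k
def FiniteLag {σ γ : Type} (L : Set (List (σ ⊕ γ))) : Prop := ∃ k, ∀ w ∈ L, lagW w ≤ k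
def FiniteShiftlag {σ γ : Type} (L : Set (List (σ ⊕ γ))) : Prop := ∃ k, ∀ w ∈ L, shiftlagW w ≤ k

/-- left quotient `u⁻¹L`. -/
def leftQuot {α : Type} (u : List α) (L : Set (List α)) : Set (List α) := {z | u ++ z ∈ L}

/-- `w ⪯_T w'` : `w` is at most as synchronous as `w'` inside `T`. -/
def syncLe {σ γ : Type} (T : Set (List (σ ⊕ γ))) (w w' : List (σ ⊕ γ)) : Prop :=
  ∀ i : ℕ, FiniteShift (leftQuot (w'.take i) T) → FiniteShift (leftQuot (w.take i) T)

def allsync {σ γ : Type} (S T : Set (List (σ ⊕ γ))) : Set (List (σ ⊕ γ)) :=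
  {w | w ∈ T ∧ syncPair w ∈ syncRel S}

def maxsync {σ γ : Type} (S T : Set (List (σ ⊕ γ))) : Set (List (σ ⊕ γ)) :=
  {w | w ∈ T ∧ syncPair w ∈ syncRel S ∧
    ∀ w' ∈ T, syncPair w' = syncPair w → syncLe T w' w}

def minsync {σ γ : Type} (S T : Set (List (σ ⊕ γ))) : Set (List (σ ⊕ γ)) :=
  {w | w ∈ T ∧ syncPair w ∈ syncRel S ∧
    ∀ w' ∈ T, syncPair w' = syncPair w → syncLe T w w'}

/-- `Rel(T)`: relations definable by regular subsets of `T`. -/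
def RelOf {σ γ : Type} (T : Set (List (σ ⊕ γ))) : Set (Set (List σ × List γ)) :=
  {R | ∃ T' : Set (List (σ ⊕ γ)), T' ⊆ T ∧ IsReg T' ∧ syncRel T' = R}

/-- the canonical synchronization language `(ΣΓ)*(Σ* + Γ*)` of automatic relations. -/
def CanonAut (σ γ : Type) : Set (List (σ ⊕ γ)) :=
  {w | ∃ (p : List (σ × γ)) (x : List σ) (y : List γ),
    (x = [] ∨ y = []) ∧
    w = (p.flatMap fun ab => [Sum.inl ab.1, Sum.inr ab.2]) ++ x.map Sum.inl ++ y.map Sum.inr}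

/-- the canonical synchronization language `Σ*Γ*` of recognizable relations. -/
def InOut (σ γ : Type) : Set (List (σ ⊕ γ)) :=
  {w | ∃ (x : List σ) (y : List γ), w = x.map Sum.inl ++ y.map Sum.inr}

/-- An automatic relation: definable by a regular subset of `(ΣΓ)*(Σ* + Γ*)`. -/
def Automatic {σ γ : Type} (R : Set (List σ × List γ)) : Prop :=
  ∃ L : Set (List (σ ⊕ γ)), L ⊆ CanonAut σ γ ∧ IsReg L ∧ syncRel L = R

/-- `x` and `y` are compatible: equal length and extendable to a common pair. -/
def Compatible {σ γ : Type} (x y : List (σ ⊕ γ)) : Prop :=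
  x.length = y.length ∧ ∃ u v : List (σ ⊕ γ), syncPair (x ++ u) = syncPair (y ++ v)

/-- `diff(x,y) = (u,v)`: `u,v` are the shortest words with `⟦xu⟧ = ⟦yv⟧`. -/
def IsDiff {σ γ : Type} (x y u v : List (σ ⊕ γ)) : Prop :=
  syncPair (x ++ u) = syncPair (y ++ v) ∧
    ∀ u' v' : List (σ ⊕ γ), syncPair (x ++ u') = syncPair (y ++ v') →
      u.length ≤ u'.length ∧ v.length ≤ v'.length

/-- Myhill–Nerode: every left quotient of `L` consists of suffixes of words of `L`. -/
theorem isReg_of_finite {α : Type} {L : Set (List α)} (hL : L.Finite) : IsReg L := by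
  classical
  refine Language.IsRegular.of_finite_range_leftQuotient
    (((hL.biUnion fun w _ => w.tails.toFinset.finite_toSet).finite_subsets).subset ?_)
  rintro _ ⟨x, rfl⟩ y hy
  exact Set.mem_biUnion hy (by simp)

section ProductUnion

variable {ι σ γ : Type} {U : ι → Set (List σ)}

theorem mem_rdom_iUnion_prod {V : ι → Set (List γ)} {u : List σ} :
    u ∈ rdom (⋃ i, {p : List σ × List γ | p.1 ∈ U i ∧ p.2 ∈ V i}) ↔
      ∃ i, u ∈ U i ∧ (V i).Nonempty := by
  simp only [rdom, Set.mem_ofPred_eq, Set.mem_iUnion]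
  exact ⟨fun ⟨w, i, hu, hw⟩ => ⟨i, hu, w, hw⟩, fun ⟨i, hu, w, hw⟩ => ⟨w, i, hu, hw⟩⟩

theorem eq_of_mem_iUnion_prod_singleton (hU : ∀ i j, i ≠ j → Disjoint (U i) (U j))
    {v : ι → List γ} {u : List σ} {v₁ v₂ : List γ}
    (h₁ : (u, v₁) ∈ ⋃ i, {p : List σ × List γ | p.1 ∈ U i ∧ p.2 = v i})
    (h₂ : (u, v₂) ∈ ⋃ i, {p : List σ × List γ | p.1 ∈ U i ∧ p.2 = v i}) : v₁ = v₂ := by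
  obtain ⟨i, hi, rfl⟩ := Set.mem_iUnion.mp h₁
  obtain ⟨j, hj, rfl⟩ := Set.mem_iUnion.mp h₂
  obtain rfl : i = j := by_contra fun hij => Set.disjoint_left.mp (hU i j hij) hi hj
  rfl

theorem recognizable_iUnion_prod_singleton {n : ℕ} {U : Fin n → Set (List σ)}
    (hU : ∀ i, IsReg (U i)) (v : Fin n → List γ) :
    Recognizable (⋃ i, {p : List σ × List γ | p.1 ∈ U i ∧ p.2 = v i}) :=
  ⟨n, U, fun i => {v i}, fun i => ⟨hU i, isReg_of_finite (Set.finite_singleton (v i))⟩, rfl⟩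

end ProductUnion

theorem stmt2_general {σ γ : Type} (n : ℕ) (U : Fin n → Set (List σ)) (V : Fin n → Set (List γ))
    (hreg : ∀ i, IsReg (U i) ∧ IsReg (V i))
    (hdisj : ∀ i j, i ≠ j → Disjoint (U i) (U j))
    (v : Fin n → List γ) (hv : ∀ i, v i ∈ V i)
    (R : Set (List σ × List γ))
    (hR : R = ⋃ i, {p : List σ × List γ | p.1 ∈ U i ∧ p.2 ∈ V i}) :
    let Rf : Set (List σ × List γ) := ⋃ i, {p : List σ × List γ | p.1 ∈ U i ∧ p.2 = v i}
    Rf ⊆ R ∧ rdom Rf = rdom R ∧ Recognizable Rf ∧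
      (∀ u v₁ v₂, (u, v₁) ∈ Rf → (u, v₂) ∈ Rf → v₁ = v₂) := by
  intro Rf
  subst hR
  refine ⟨Set.iUnion_mono fun i p hp => ⟨hp.1, hp.2 ▸ hv i⟩, ?_,
    recognizable_iUnion_prod_singleton (fun i => (hreg i).1) v,
    fun _ _ _ => eq_of_mem_iUnion_prod_singleton hdisj⟩
  have hdom : ∀ u, u ∈ rdom Rf ↔ ∃ i, u ∈ U i ∧ ({v i} : Set (List γ)).Nonempty :=
    fun _ => mem_rdom_iUnion_prod (V := fun i => {v i})
  ext u
  rw [hdom, mem_rdom_iUnion_prod]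
  exact exists_congr fun i =>
    and_congr_right fun _ => iff_of_true (Set.singleton_nonempty _) ⟨v i, hv i⟩

/-- if `R = ⋃ U_i × V_i` with the `U_i` pairwise disjoint regular and the `V_i`
nonempty regular, and `v_i ∈ V_i` are chosen, then `R_f = ⋃ U_i × {v_i}` is a uniformization
of `R` by a recognizable relation. -/
theorem stmt2 {σ γ : Type} (n : ℕ) (U : Fin n → Set (List σ)) (V : Fin n → Set (List γ))
    (hreg : ∀ i, IsReg (U i) ∧ IsReg (V i))
    (hdisj : ∀ i j, i ≠ j → Disjoint (U i) (U j))
    (hne : ∀ i, (V i).Nonempty)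
    (v : Fin n → List γ) (hv : ∀ i, v i ∈ V i)
    (R : Set (List σ × List γ))
    (hR : R = ⋃ i, {p : List σ × List γ | p.1 ∈ U i ∧ p.2 ∈ V i}) :
    let Rf : Set (List σ × List γ) := ⋃ i, {p : List σ × List γ | p.1 ∈ U i ∧ p.2 = v i}
    Rf ⊆ R ∧ rdom Rf = rdom R ∧ Recognizable Rf ∧
      (∀ u v₁ v₂, (u, v₁) ∈ Rf → (u, v₂) ∈ Rf → v₁ = v₂) :=
  stmt2_general n U V hreg hdisj v hv R hR
end

section
/- Let S ⊆ (Σ∪Γ)* be regular with finite shift and T ⊆ (Σ∪Γ)* be regular such that every pair in ⟦S⟧ has a synchronization in T (i.e. ⟦S⟧ ⊆ ⟦T⟧). Then there exists a regular language U ⊆ T with ⟦U⟧ = ⟦S⟧, namely U = {w ∈ T | ⟦w⟧ ∈ ⟦S⟧}. -/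
/-!
A word with at most `k` shifts lies in `(Σ*Γ*)^(k+1)`. Reading such a word of `S` block by block
through a DFA for `S`, `⟦S⟧` becomes a finite union, over the states at the block boundaries, of
componentwise concatenations of products of path languages of the automaton restricted to `Σ`
and to `Γ`: a recognizable relation. The preimage under `⟦·⟧` of a recognizable relation is
regular, hence so is `U = T ∩ ⟦·⟧⁻¹⟦S⟧`, and `⟦S⟧ ⊆ ⟦T⟧` gives `⟦U⟧ = ⟦S⟧`.
-/

open List

namespace DFA

variable {α β σ : Type*}

def comapFilterMap (f : α → Option β) (M : DFA β σ) : DFA α σ where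
  step q a := (f a).elim q (M.step q)
  start := M.start
  accept := M.accept

theorem evalFrom_comapFilterMap (f : α → Option β) (M : DFA β σ) (q : σ) (w : List α) :
    (M.comapFilterMap f).evalFrom q w = M.evalFrom q (w.filterMap f) := by
  induction w generalizing q with
  | nil => rfl
  | cons a w ih =>
    rw [evalFrom_cons, ih]
    cases h : f a <;> simp [comapFilterMap, h]

theorem accepts_comapFilterMap (f : α → Option β) (M : DFA β σ) :
    (M.comapFilterMap f).accepts = {w | w.filterMap f ∈ M.accepts} := by
  ext w
  simp only [mem_accepts, eval, evalFrom_comapFilterMap]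
  rfl

def pathLanguage (M : DFA α σ) (p q : σ) : Language α := {x | M.evalFrom p x = q}

@[simp]
theorem mem_pathLanguage (M : DFA α σ) (p q : σ) (x : List α) :
    x ∈ M.pathLanguage p q ↔ M.evalFrom p x = q :=
  Iff.rfl

theorem isRegular_pathLanguage [Fintype σ] (M : DFA α σ) (p q : σ) :
    (M.pathLanguage p q).IsRegular :=
  Language.isRegular_iff.mpr ⟨σ, inferInstance, ⟨M.step, p, {q}⟩, rfl⟩

end DFA

namespace Language

variable {α β : Type*}

theorem isRegular_zero : (0 : Language α).IsRegular :=
  IsRegular.of_finite_range_leftQuotient <| (Set.finite_singleton 0).subset <| by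
    rintro _ ⟨u, rfl⟩
    ext z
    simp [Language.notMem_zero]

theorem isRegular_one : (1 : Language α).IsRegular :=
  IsRegular.of_finite_range_leftQuotient <| (Set.toFinite {1, 0}).subset <| by
    rintro _ ⟨u, rfl⟩
    rcases u with _ | ⟨a, u⟩
    · simp
    · right
      ext z
      simp [mem_one, notMem_zero]

theorem leftQuotient_mul (A B : Language α) (u : List α) :
    (A * B).leftQuotient u =
      A.leftQuotient u * B + ⨆ v ∈ {v | ∃ a ∈ A, a ++ v = u}, B.leftQuotient v := by
  ext z
  simp only [mem_leftQuotient, mem_mul, mem_add, mem_iSup, Set.mem_ofPred_eq]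
  constructor
  · rintro ⟨a, ha, b, hb, hab⟩
    rcases List.append_eq_append_iff.mp hab with ⟨a', rfl, rfl⟩ | ⟨c', rfl, rfl⟩
    · exact Or.inr ⟨a', ⟨a, ha, rfl⟩, hb⟩
    · exact Or.inl ⟨c', ha, b, hb, rfl⟩
  · rintro (⟨a', ha, b, hb, rfl⟩ | ⟨v, ⟨a, ha, rfl⟩, hv⟩)
    · exact ⟨u ++ a', ha, b, hb, by simp⟩
    · exact ⟨a, ha, v ++ z, hv, by simp⟩

/- Myhill–Nerode: a left quotient of `A * B` is determined by a left quotient of `A` together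
with a set of left quotients of `B`. -/
theorem IsRegular.mul {A B : Language α} (hA : A.IsRegular) (hB : B.IsRegular) :
    (A * B).IsRegular := by
  refine IsRegular.of_finite_range_leftQuotient <|
    ((hA.finite_range_leftQuotient.prod hB.finite_range_leftQuotient.finite_subsets).image
      fun KS : Language α × Set (Language α) => KS.1 * B + sSup KS.2).subset ?_
  rintro _ ⟨u, rfl⟩
  refine ⟨(A.leftQuotient u, B.leftQuotient '' {v | ∃ a ∈ A, a ++ v = u}),
    ⟨⟨u, rfl⟩, Set.image_subset_range _ _⟩, ?_⟩
  rw [leftQuotient_mul, ← sSup_image]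

theorem isRegular_biUnion {ι : Type*} {s : Set ι} (hs : s.Finite) {L : ι → Language α}
    (h : ∀ i ∈ s, (L i).IsRegular) : (⨆ i ∈ s, L i).IsRegular := by
  induction s, hs using Set.Finite.induction_on with
  | empty => rw [iSup_emptyset]; exact isRegular_zero
  | insert _ _ ih =>
    rw [iSup_insert]
    exact (h _ (Set.mem_insert _ _)).add (ih fun i hi => h i (Set.mem_insert_of_mem _ hi))

theorem isRegular_iUnion {ι : Type*} [Finite ι] {L : ι → Language α}
    (h : ∀ i, (L i).IsRegular) : (⨆ i, L i).IsRegular := by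
  simpa using isRegular_biUnion Set.finite_univ fun i _ => h i

theorem IsRegular.preimage_filterMap {L : Language β} (h : L.IsRegular) (f : α → Option β) :
    IsRegular {w : List α | w.filterMap f ∈ L} := by
  obtain ⟨Q, _, M, rfl⟩ := h
  exact ⟨Q, inferInstance, M.comapFilterMap f, M.accepts_comapFilterMap f⟩

end Language

section Synchronization

variable {σ γ : Type}

theorem syncPair_append (u v : List (σ ⊕ γ)) :
    syncPair (u ++ v) = ((syncPair u).1 ++ (syncPair v).1, (syncPair u).2 ++ (syncPair v).2) := by
  simp [syncPair, piIn, piOut]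

theorem syncPair_map_inl_append_map_inr (x : List σ) (y : List γ) :
    syncPair (x.map Sum.inl ++ y.map Sum.inr) = (x, y) := by
  simp [syncPair, piIn, piOut, Function.comp_def]

theorem shiftCount_le_cons (a : σ ⊕ γ) (t : List (σ ⊕ γ)) :
    shiftCount t ≤ shiftCount (a :: t) := by
  cases t with
  | nil => exact le_rfl
  | cons b t =>
    simp only [shiftCount, List.tail_cons, List.zip_cons_cons, List.countP_cons]
    exact Nat.le_add_right _ _

theorem shiftCount_inr_cons_inl (y : γ) (x : σ) (t : List (σ ⊕ γ)) :
    shiftCount (Sum.inr y :: Sum.inl x :: t) = shiftCount (Sum.inl x :: t) + 1 := by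
  simp [shiftCount]

/-- `Σ*Γ*` as a `Language`, so that its powers are available. -/
def inOutLanguage (σ γ : Type) : Language (σ ⊕ γ) := InOut σ γ

theorem nil_mem_inOut_pow (n : ℕ) : [] ∈ inOutLanguage σ γ ^ n := by
  induction n with
  | zero => exact Language.nil_mem_one
  | succ n ih => exact Language.mem_mul.mpr ⟨[], ih, [], ⟨[], [], rfl⟩, rfl⟩

theorem mem_inOut_pow_of_shiftCount_lt (w : List (σ ⊕ γ)) (n : ℕ) (hw : shiftCount w < n) :
    w ∈ inOutLanguage σ γ ^ n := by
  induction w generalizing n with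
  | nil => exact nil_mem_inOut_pow n
  | cons a t ih =>
    obtain ⟨m, rfl⟩ : ∃ m, n = m + 1 := Nat.exists_eq_add_one.mpr (by omega)
    have ht := ih (m + 1) ((shiftCount_le_cons a t).trans_lt hw)
    rw [pow_succ', Language.mem_mul] at ht ⊢
    obtain ⟨_, ⟨xs, ys, rfl⟩, v, hv, rfl⟩ := ht
    rcases a with x | y
    · exact ⟨_, ⟨x :: xs, ys, rfl⟩, v, hv, by simp⟩
    · rcases xs with _ | ⟨x, xs⟩
      · exact ⟨_, ⟨[], y :: ys, rfl⟩, v, hv, by simp⟩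
      · -- `inr y` followed by `inl x` is a shift, so `t` fits into one block fewer
        simp only [List.map_cons, List.cons_append, shiftCount_inr_cons_inl] at hw ih
        exact ⟨_, ⟨[], [y], rfl⟩, _, ih m (by omega), rfl⟩

end Synchronization

section RegularRectangles

variable {σ γ : Type}

def IsRegularRectUnion (R : Set (List σ × List γ)) : Prop :=
  ∃ F : Set (Language σ × Language γ), F.Finite ∧ (∀ AB ∈ F, AB.1.IsRegular ∧ AB.2.IsRegular) ∧
    R = ⋃ AB ∈ F, {p | p.1 ∈ AB.1 ∧ p.2 ∈ AB.2}

def appendRel (R₁ R₂ : Set (List σ × List γ)) : Set (List σ × List γ) :=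
  Set.image2 (fun r₁ r₂ => (r₁.1 ++ r₂.1, r₁.2 ++ r₂.2)) R₁ R₂

theorem isRegularRectUnion_singleton_nil : IsRegularRectUnion {(([] : List σ), ([] : List γ))} :=
  ⟨{(1, 1)}, Set.finite_singleton _, by simp [Language.isRegular_one], by
    ext ⟨x, y⟩; simp [Language.mem_one]⟩

theorem IsRegularRectUnion.iUnion {ι : Sort*} [Finite ι] {R : ι → Set (List σ × List γ)}
    (h : ∀ i, IsRegularRectUnion (R i)) : IsRegularRectUnion (⋃ i, R i) := by
  choose F hF hreg hR using h
  refine ⟨⋃ i, F i, Set.finite_iUnion hF, ?_, ?_⟩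
  · simp only [Set.mem_iUnion]
    rintro AB ⟨i, hi⟩
    exact hreg i AB hi
  · simp only [hR, Set.biUnion_iUnion]

theorem IsRegularRectUnion.prod_appendRel {A : Language σ} {B : Language γ}
    {R : Set (List σ × List γ)} (hA : A.IsRegular) (hB : B.IsRegular)
    (hR : IsRegularRectUnion R) :
    IsRegularRectUnion (appendRel {p | p.1 ∈ A ∧ p.2 ∈ B} R) := by
  obtain ⟨F, hF, hreg, rfl⟩ := hR
  refine ⟨(fun CD => (A * CD.1, B * CD.2)) '' F, hF.image _, ?_, ?_⟩
  · rintro _ ⟨CD, hCD, rfl⟩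
    exact ⟨hA.mul (hreg CD hCD).1, hB.mul (hreg CD hCD).2⟩
  · ext ⟨x, y⟩
    simp only [appendRel, Set.mem_image2, Set.mem_ofPred_eq, Set.mem_iUnion, Set.biUnion_image,
      Language.mem_mul, Prod.exists, Prod.mk.injEq, exists_prop]
    constructor
    · rintro ⟨x₁, y₁, ⟨hx₁, hy₁⟩, x₂, y₂, ⟨C, D, hCD, hx₂, hy₂⟩, rfl, rfl⟩
      exact ⟨C, D, hCD, ⟨x₁, hx₁, x₂, hx₂, rfl⟩, ⟨y₁, hy₁, y₂, hy₂, rfl⟩⟩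
    · rintro ⟨C, D, hCD, ⟨x₁, hx₁, x₂, hx₂, rfl⟩, ⟨y₁, hy₁, y₂, hy₂, rfl⟩⟩
      exact ⟨x₁, y₁, ⟨hx₁, hy₁⟩, x₂, y₂, ⟨C, D, hCD, hx₂, hy₂⟩, rfl, rfl⟩

theorem IsRegularRectUnion.recognizable {R : Set (List σ × List γ)}
    (hR : IsRegularRectUnion R) : Recognizable R := by
  obtain ⟨F, hF, hreg, rfl⟩ := hR
  have : Finite F := hF.to_subtype
  obtain ⟨n, ⟨e⟩⟩ := Finite.exists_equiv_fin F
  refine ⟨n, fun i => (e.symm i).1.1, fun i => (e.symm i).1.2, fun i => hreg _ (e.symm i).2, ?_⟩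
  ext ⟨x, y⟩
  simp only [Set.mem_iUnion, Set.mem_ofPred_eq, exists_prop]
  exact ⟨fun ⟨AB, hAB, h⟩ => ⟨e ⟨AB, hAB⟩, by rw [Equiv.symm_apply_apply]; exact h⟩,
    fun ⟨i, h⟩ => ⟨_, (e.symm i).2, h⟩⟩

theorem Recognizable.isReg_syncPair_preimage {R : Set (List σ × List γ)} (hR : Recognizable R) :
    IsReg {w : List (σ ⊕ γ) | syncPair w ∈ R} := by
  obtain ⟨n, U, V, hreg, rfl⟩ := hR
  have hpre : {w : List (σ ⊕ γ) | syncPair w ∈ ⋃ i, {p | p.1 ∈ U i ∧ p.2 ∈ V i}} =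
      ⋃ i, {w | piIn w ∈ U i} ∩ {w | piOut w ∈ V i} := by
    ext w
    simp [syncPair]
  rw [hpre]
  exact Language.isRegular_iUnion fun i =>
    ((hreg i).1.preimage_filterMap _).inf ((hreg i).2.preimage_filterMap _)

end RegularRectangles

section BlockRelation

variable {σ γ Q : Type}

def blockRel (M : DFA (σ ⊕ γ) Q) (n : ℕ) (p q : Q) : Set (List σ × List γ) :=
  syncRel {w | w ∈ inOutLanguage σ γ ^ n ∧ M.evalFrom p w = q}

theorem blockRel_zero (M : DFA (σ ⊕ γ) Q) (p q : Q) :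
    blockRel M 0 p q = ⋃ (_ : p = q), {([], [])} := by
  ext r
  simp [blockRel, syncRel, Language.mem_one, syncPair, piIn, piOut, eq_comm]

theorem blockRel_succ (M : DFA (σ ⊕ γ) Q) (n : ℕ) (p q : Q) :
    blockRel M (n + 1) p q = ⋃ (r) (s), appendRel
      {xy | xy.1 ∈ (M.comap Sum.inl).pathLanguage p r ∧ xy.2 ∈ (M.comap Sum.inr).pathLanguage r s}
      (blockRel M n s q) := by
  ext xy
  simp only [blockRel, syncRel, appendRel, DFA.mem_pathLanguage, pow_succ', Language.mem_mul,
    Set.mem_iUnion, Set.mem_image, Set.mem_image2, Set.mem_ofPred_eq]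
  constructor
  · rintro ⟨_, ⟨⟨_, ⟨xs, ys, rfl⟩, w, hw, rfl⟩, rfl⟩, rfl⟩
    refine ⟨_, _, (xs, ys), ⟨rfl, rfl⟩, syncPair w, ⟨w, ⟨hw, ?_⟩, rfl⟩, ?_⟩
    · simp [DFA.evalFrom_of_append, DFA.evalFrom_comap]
    · rw [syncPair_append, syncPair_map_inl_append_map_inr]
  · rintro ⟨r, s, ⟨xs, ys⟩, ⟨hxs, hys⟩, _, ⟨w, ⟨hw, hsq⟩, rfl⟩, rfl⟩
    refine ⟨xs.map Sum.inl ++ ys.map Sum.inr ++ w, ⟨⟨_, ⟨xs, ys, rfl⟩, w, hw, rfl⟩, ?_⟩, ?_⟩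
    · rw [DFA.evalFrom_comap] at hxs hys
      rw [DFA.evalFrom_of_append, DFA.evalFrom_of_append, hxs, hys, hsq]
    · rw [syncPair_append, syncPair_map_inl_append_map_inr]

theorem isRegularRectUnion_blockRel [Fintype Q] (M : DFA (σ ⊕ γ) Q) (n : ℕ) (p q : Q) :
    IsRegularRectUnion (blockRel M n p q) := by
  induction n generalizing p with
  | zero =>
    rw [blockRel_zero]
    exact .iUnion fun _ => isRegularRectUnion_singleton_nil
  | succ n ih =>
    rw [blockRel_succ]
    exact .iUnion fun r => .iUnion fun s => .prod_appendRel
      ((M.comap Sum.inl).isRegular_pathLanguage p r) ((M.comap Sum.inr).isRegular_pathLanguage r s)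
      (ih s)

theorem recognizable_syncRel_of_finiteShift {S : Set (List (σ ⊕ γ))} (hS : IsReg S)
    (hSfs : FiniteShift S) : Recognizable (syncRel S) := by
  obtain ⟨Q, _, M, rfl⟩ := hS
  obtain ⟨k, hk⟩ := hSfs
  have hblocks : syncRel M.accepts = ⋃ (q) (_ : q ∈ M.accept), blockRel M (k + 1) M.start q := by
    ext xy
    simp only [syncRel, blockRel, Set.mem_image, Set.mem_iUnion, Set.mem_ofPred_eq, exists_prop]
    constructor
    · rintro ⟨w, hw, rfl⟩
      exact ⟨M.eval w, hw, w, ⟨mem_inOut_pow_of_shiftCount_lt w _ (Nat.lt_succ_of_le (hk w hw)),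
        rfl⟩, rfl⟩
    · rintro ⟨q, hq, w, ⟨-, rfl⟩, rfl⟩
      exact ⟨w, hq, rfl⟩
  rw [hblocks]
  exact (IsRegularRectUnion.iUnion fun q =>
    .iUnion fun _ => isRegularRectUnion_blockRel M _ _ q).recognizable

end BlockRelation

theorem syncRel_sep_mem_syncRel {σ γ : Type} {S T : Set (List (σ ⊕ γ))}
    (hsub : syncRel S ⊆ syncRel T) : syncRel {w | w ∈ T ∧ syncPair w ∈ syncRel S} = syncRel S := by
  refine (Set.image_subset_iff.mpr fun w hw => hw.2).antisymm fun xy hxy => ?_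
  obtain ⟨w, hwT, rfl⟩ := hsub hxy
  exact ⟨w, ⟨hwT, hxy⟩, rfl⟩

/-- if `S` is regular with finite shift, `T` regular, and `⟦S⟧ ⊆ ⟦T⟧`, then
`U = {w ∈ T | ⟦w⟧ ∈ ⟦S⟧}` is a regular subset of `T` with `⟦U⟧ = ⟦S⟧`. -/
theorem stmt4 {σ γ : Type} (S T : Set (List (σ ⊕ γ)))
    (hS : IsReg S) (hSfs : FiniteShift S) (hT : IsReg T)
    (hsub : syncRel S ⊆ syncRel T) :
    let U : Set (List (σ ⊕ γ)) := {w | w ∈ T ∧ syncPair w ∈ syncRel S}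
    U ⊆ T ∧ IsReg U ∧ syncRel U = syncRel S :=
  ⟨fun _ hw => hw.1,
    Language.IsRegular.inf hT (recognizable_syncRel_of_finiteShift hS hSfs).isReg_syncPair_preimage,
    syncRel_sep_mem_syncRel hsub⟩
end

section
/- For the alphabets Σ = {a} and Γ = {b}: the language a*b*a* has infinite lag and shiftlag equal to 2, and the language a*b*a*b* has shiftlag equal to 3. -/
open List

/-!
The shiftlag of a word is at most its number of shifts, and a word made of `m` blocks of equal
letters has at most `m - 1` shifts; so the words of `a*b*a*` have shiftlag at most 2 and those of
`a*b*a*b*` at most 3. The bounds are attained by `a²b⁴a²`, whose two shifts are 2-lagged, and by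
`a³b⁶a⁶b³`, whose three shifts are 3-lagged. The lag of `aⁿ` is `n`, so `a*b*a*` has infinite lag.
-/

section

variable {σ γ : Type}

lemma shiftCount_cons_cons (x y : σ ⊕ γ) (t : List (σ ⊕ γ)) :
    shiftCount (x :: y :: t) = shiftCount (y :: t) + if x.isLeft != y.isLeft then 1 else 0 := by
  simp [shiftCount, countP_cons]

lemma shiftCount_cons_le (x : σ ⊕ γ) (w : List (σ ⊕ γ)) :
    shiftCount (x :: w) ≤ shiftCount w + 1 := by
  cases w with
  | nil => simp [shiftCount]
  | cons y t => rw [shiftCount_cons_cons]; split <;> omega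

lemma shiftCount_replicate_succ_append (n : ℕ) (x : σ ⊕ γ) (w : List (σ ⊕ γ)) :
    shiftCount (replicate (n + 1) x ++ w) = shiftCount (x :: w) := by
  induction n with
  | zero => rfl
  | succ n ih =>
    rw [← ih, replicate_succ, cons_append, replicate_succ, cons_append, shiftCount_cons_cons]
    simp

lemma shiftCount_replicate (n : ℕ) (x : σ ⊕ γ) : shiftCount (replicate n x) = 0 := by
  cases n with
  | zero => rfl
  | succ n => rw [← append_nil (replicate _ _), shiftCount_replicate_succ_append]; rfl

lemma shiftCount_replicate_append_le (n : ℕ) (x : σ ⊕ γ) (w : List (σ ⊕ γ)) :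
    shiftCount (replicate n x ++ w) ≤ shiftCount w + 1 := by
  cases n with
  | zero => simp
  | succ n => rw [shiftCount_replicate_succ_append]; exact shiftCount_cons_le x w

theorem shiftCount_flatMap_replicate_le (bs : List (ℕ × (σ ⊕ γ))) :
    shiftCount (bs.flatMap fun p => replicate p.1 p.2) ≤ bs.length - 1 := by
  induction bs with
  | nil => simp [shiftCount]
  | cons p bs ih =>
    cases bs with
    | nil => simp [shiftCount_replicate]
    | cons q bs =>
      rw [flatMap_cons]
      have := shiftCount_replicate_append_le p.1 p.2 ((q :: bs).flatMap fun p => replicate p.1 p.2)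
      simp only [length_cons] at ih ⊢
      omega

lemma length_shiftList (w : List (σ ⊕ γ)) : (shiftList w).length = shiftCount w := by
  induction w with
  | nil => rfl
  | cons x w ih =>
    cases w with
    | nil => simp [shiftList, shiftCount]
    | cons y t =>
      rw [shiftCount_cons_cons, ← ih]
      rcases x with x | x <;> rcases y with y | y <;>
        simp [shiftList, range_succ_eq_map (n := t.length + 1), filter_map, Function.comp_def]

theorem shiftlagW_le_shiftCount (w : List (σ ⊕ γ)) : shiftlagW w ≤ shiftCount w := by
  refine csSup_le' ?_
  rintro n ⟨l, hl, rfl, -⟩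
  exact length_shiftList w ▸ hl.length_le

theorem le_shiftlagW {w : List (σ ⊕ γ)} {l : List ℕ} {n : ℕ} (hl : l <:+: shiftList w)
    (hlen : l.length = n) (hlag : ∀ j ∈ l, n ≤ lagAt w (j + 1)) : n ≤ shiftlagW w := by
  refine le_csSup ⟨(shiftList w).length, ?_⟩ ⟨l, hl, hlen, hlag⟩
  rintro m ⟨l', hl', rfl, -⟩
  exact hl'.length_le

lemma lagAt_le_lagW {w : List (σ ⊕ γ)} {i : ℕ} (hi : i ≤ w.length) : lagAt w i ≤ lagW w :=
  Finset.le_sup (Finset.mem_range_succ_iff.mpr hi)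

lemma lagAt_replicate_inl (n i : ℕ) (x : σ) :
    lagAt (replicate n (Sum.inl x : σ ⊕ γ)) i = min i n := by
  simp [lagAt, take_replicate, countP_replicate, -Nat.cast_min]

end

/-- over `Σ = {a}`, `Γ = {b}`, the language `a*b*a*` has infinite lag and
shiftlag `2`, and `a*b*a*b*` has shiftlag `3`. -/
theorem stmt5 :
    let a : Unit ⊕ Unit := Sum.inl ()
    let b : Unit ⊕ Unit := Sum.inr ()
    let L1 : Set (List (Unit ⊕ Unit)) :=
      {w | ∃ i j k, w = List.replicate i a ++ List.replicate j b ++ List.replicate k a}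
    let L2 : Set (List (Unit ⊕ Unit)) :=
      {w | ∃ i j k l, w = List.replicate i a ++ List.replicate j b ++
            List.replicate k a ++ List.replicate l b}
    ¬ FiniteLag L1 ∧
    (∀ w ∈ L1, shiftlagW w ≤ 2) ∧ (∃ w ∈ L1, 2 ≤ shiftlagW w) ∧
    (∀ w ∈ L2, shiftlagW w ≤ 3) ∧ (∃ w ∈ L2, 3 ≤ shiftlagW w) := by
  intro a b L1 L2
  refine ⟨?_, ?_, ?_, ?_, ?_⟩
  · rintro ⟨K, hK⟩
    have hlag := lagAt_le_lagW (w := replicate (K + 1) a) (i := K + 1) (by simp)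
    rw [lagAt_replicate_inl, min_self] at hlag
    have := hK (replicate (K + 1) a) ⟨K + 1, 0, 0, by simp⟩
    omega
  · rintro w ⟨i, j, k, rfl⟩
    refine (shiftlagW_le_shiftCount _).trans ?_
    simpa using shiftCount_flatMap_replicate_le [(i, a), (j, b), (k, a)]
  · exact ⟨_, ⟨2, 4, 2, rfl⟩, le_shiftlagW List.infix_rfl (by decide) (by decide)⟩
  · rintro w ⟨i, j, k, l, rfl⟩
    refine (shiftlagW_le_shiftCount _).trans ?_
    simpa using shiftCount_flatMap_replicate_le [(i, a), (j, b), (k, a), (l, b)]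
  · exact ⟨_, ⟨3, 6, 6, 3, rfl⟩, le_shiftlagW List.infix_rfl (by decide) (by decide)⟩
end

section
/- Let Σ = {a}, Γ = {b}, S = (ab)* + (ab)*(aa a* + bb b*), and T = a*b* + (ab)*(aa a* + bb b*). Then the set T' = {uv | u ∈ a*, v ∈ b*, (|u| − |v|) mod 2 = 0} ∪ (ab)*(aa a* + bb b*) is a regular subset of T satisfying ⟦T'⟧ = ⟦S⟧; in particular ⟦S⟧ ∈ Rel(T). -/
/-!
For a word `uv` with `u ∈ a*`, `v ∈ b*`, the condition `|u| ≡ |v| (mod 2)` says that `uv` has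
even length, so `T'` is `(a*b* ∩ even length) ∪ (ab)*(aaa* + bbb*)`; each piece is accepted by a
small DFA, and regular languages are closed under union and intersection.
For the relations, `⟦(ab)ⁿ⟧ = ⟦aⁿbⁿ⟧`, while a pair `(aᵐ, bⁿ)` with `m ≡ n (mod 2)` and `m ≠ n`
has `|m - n| ≥ 2`, so it is also synchronised by `(ab)^min(m,n)` followed by the surplus letters,
a word of `(ab)*(aaa* + bbb*)`.
-/

open List

/-- `(ab)^n` for `Σ = {a}`, `Γ = {b}`. -/
def abRep (n : ℕ) : List (Unit ⊕ Unit) :=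
  (List.replicate n ([Sum.inl (), Sum.inr ()] : List (Unit ⊕ Unit))).flatten
namespace DFA

variable {α σ : Type*} (M : DFA α σ)

theorem eval_induction (P : σ → List α → Prop) (start : P M.start [])
    (step : ∀ s a w, P s w → P (M.step s a) (w ++ [a])) (w : List α) : P (M.eval w) w := by
  induction w using List.reverseRecOn with
  | nil => exact start
  | append_singleton w a ih => rw [eval_append_singleton]; exact step _ _ _ ih

theorem evalFrom_eq_self_of_forall_mem {s : σ} {w : List α} (h : ∀ a ∈ w, M.step s a = s) :
    M.evalFrom s w = s := by
  induction w with
  | nil => rfl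
  | cons a w ih =>
    rw [evalFrom_cons, h a List.mem_cons_self]
    exact ih fun b hb => h b (List.mem_cons_of_mem a hb)

theorem evalFrom_replicate_of_step_eq {s : σ} {a : α} (h : M.step s a = s) (m : ℕ) :
    M.evalFrom s (List.replicate m a) = s :=
  M.evalFrom_eq_self_of_forall_mem fun _ hb => List.eq_of_mem_replicate hb ▸ h

end DFA

theorem isReg_accepts {α σ : Type} [Fintype σ] (M : DFA α σ) : IsReg (M.accepts : Set (List α)) :=
  ⟨σ, inferInstance, M, rfl⟩

theorem IsReg.union {α : Type} {L₁ L₂ : Set (List α)} (h₁ : IsReg L₁) (h₂ : IsReg L₂) :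
    IsReg (L₁ ∪ L₂) :=
  Language.IsRegular.add h₁ h₂

theorem IsReg.inter {α : Type} {L₁ L₂ : Set (List α)} (h₁ : IsReg L₁) (h₂ : IsReg L₂) :
    IsReg (L₁ ∩ L₂) :=
  Language.IsRegular.inf h₁ h₂

def evenLengthDFA (α : Type) : DFA α Bool := ⟨fun s _ => !s, true, {true}⟩

theorem evenLengthDFA_accepts (α : Type) :
    (evenLengthDFA α).accepts = {w : List α | Even w.length} := by
  ext w
  exact (DFA.mem_accepts _).trans <|
    (evenLengthDFA α).eval_induction (fun s w => s = true ↔ Even w.length)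
      (by simp [evenLengthDFA]) (fun s a w h => by simp [evenLengthDFA, ← h, Nat.even_add_one]) w

theorem isReg_even_length (α : Type) : IsReg {w : List α | Even w.length} :=
  evenLengthDFA_accepts α ▸ isReg_accepts (evenLengthDFA α)

inductive InOutState
  | input
  | output
  | dead
  deriving DecidableEq

instance : Fintype InOutState :=
  ⟨{.input, .output, .dead}, fun s => by cases s <;> simp⟩

def inOutDFA (σ γ : Type) : DFA (σ ⊕ γ) InOutState where
  step
    | .input, .inl _ => .input
    | .input, .inr _ => .output
    | .output, .inr _ => .output
    | _, _ => .dead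
  start := .input
  accept := {.input, .output}

def inOutInv {σ γ : Type} : InOutState → List (σ ⊕ γ) → Prop
  | .input, w => ∃ x : List σ, w = x.map Sum.inl
  | .output, w => w ∈ InOut σ γ
  | .dead, _ => True

theorem inOutInv_eval {σ γ : Type} (w : List (σ ⊕ γ)) : inOutInv ((inOutDFA σ γ).eval w) w := by
  refine (inOutDFA σ γ).eval_induction inOutInv ⟨[], rfl⟩ ?_ w
  rintro (_ | _ | _) (x | y) w h <;> simp only [inOutDFA, inOutInv] at h ⊢
  · obtain ⟨x', rfl⟩ := h
    exact ⟨x' ++ [x], by simp⟩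
  · obtain ⟨x', rfl⟩ := h
    exact ⟨x', [y], rfl⟩
  · obtain ⟨x', y', rfl⟩ := h
    exact ⟨x', y' ++ [y], by simp⟩

theorem inOutDFA_accepts (σ γ : Type) : (inOutDFA σ γ).accepts = InOut σ γ := by
  ext w
  refine ⟨fun hw => ?_, ?_⟩
  · have hinv := inOutInv_eval w
    rcases (DFA.mem_accepts _).1 hw with hs | hs <;> rw [hs] at hinv
    · obtain ⟨x, rfl⟩ := hinv
      exact ⟨x, [], by simp⟩
    · exact hinv
  · rintro ⟨x, y, rfl⟩
    have hx : (inOutDFA σ γ).evalFrom (inOutDFA σ γ).start (x.map Sum.inl) = .input :=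
      DFA.evalFrom_eq_self_of_forall_mem _ (by simp [inOutDFA])
    have hy : ∀ y' : List γ, (inOutDFA σ γ).evalFrom .output (y'.map Sum.inr) = .output :=
      fun _ => DFA.evalFrom_eq_self_of_forall_mem _ (by simp [inOutDFA])
    rw [DFA.mem_accepts, DFA.eval, DFA.evalFrom_of_append, hx]
    rcases y with _ | ⟨c, y⟩
    · simp [inOutDFA]
    · rw [List.map_cons, DFA.evalFrom_cons]
      show (inOutDFA σ γ).evalFrom .output _ ∈ _
      rw [hy]
      exact .inr rfl

section Projections

variable {σ γ : Type}

@[simp]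
theorem piIn_append (u v : List (σ ⊕ γ)) : piIn (u ++ v) = piIn u ++ piIn v :=
  List.filterMap_append

@[simp]
theorem piOut_append (u v : List (σ ⊕ γ)) : piOut (u ++ v) = piOut u ++ piOut v :=
  List.filterMap_append

@[simp]
theorem piIn_replicate_inl (m : ℕ) (x : σ) :
    piIn (List.replicate m (Sum.inl x : σ ⊕ γ)) = List.replicate m x := by
  simp [piIn, List.filterMap_replicate]

@[simp]
theorem piIn_replicate_inr (m : ℕ) (y : γ) :
    piIn (List.replicate m (Sum.inr y : σ ⊕ γ)) = [] := by
  simp [piIn, List.filterMap_replicate]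

@[simp]
theorem piOut_replicate_inl (m : ℕ) (x : σ) :
    piOut (List.replicate m (Sum.inl x : σ ⊕ γ)) = [] := by
  simp [piOut, List.filterMap_replicate]

@[simp]
theorem piOut_replicate_inr (m : ℕ) (y : γ) :
    piOut (List.replicate m (Sum.inr y : σ ⊕ γ)) = List.replicate m y := by
  simp [piOut, List.filterMap_replicate]

theorem syncPair_replicate_append_replicate (m n : ℕ) (x : σ) (y : γ) :
    syncPair (List.replicate m (Sum.inl x) ++ List.replicate n (Sum.inr y)) =
      (List.replicate m x, List.replicate n y) := by
  simp [syncPair]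

end Projections

theorem abRep_succ (n : ℕ) : abRep (n + 1) = [Sum.inl (), Sum.inr ()] ++ abRep n := by
  simp [abRep, List.replicate_succ]

@[simp]
theorem piIn_abRep (n : ℕ) : piIn (abRep n) = List.replicate n () := by
  induction n with
  | zero => rfl
  | succ n ih => rw [abRep_succ, piIn_append, ih]; rfl

@[simp]
theorem piOut_abRep (n : ℕ) : piOut (abRep n) = List.replicate n () := by
  induction n with
  | zero => rfl
  | succ n ih => rw [abRep_succ, piOut_append, ih]; rfl

theorem abRep_succ' (n : ℕ) : abRep (n + 1) = abRep n ++ [Sum.inl (), Sum.inr ()] := by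
  simp [abRep, List.replicate_succ']

theorem syncPair_abRep (n : ℕ) :
    syncPair (abRep n) = (List.replicate n (), List.replicate n ()) := by
  simp [syncPair]

theorem syncPair_abRep_append_replicate_inl (n m : ℕ) :
    syncPair (abRep n ++ List.replicate m (Sum.inl ())) =
      (List.replicate (n + m) (), List.replicate n ()) := by
  simp [syncPair]

theorem syncPair_abRep_append_replicate_inr (n m : ℕ) :
    syncPair (abRep n ++ List.replicate m (Sum.inr ())) =
      (List.replicate n (), List.replicate (n + m) ()) := by
  simp [syncPair]

def abPowers : Set (List (Unit ⊕ Unit)) := {w | ∃ n, w = abRep n}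

def abTail : Set (List (Unit ⊕ Unit)) :=
  {w | ∃ n m, 2 ≤ m ∧
    (w = abRep n ++ List.replicate m (Sum.inl ()) ∨ w = abRep n ++ List.replicate m (Sum.inr ()))}

def parityWords : Set (List (Unit ⊕ Unit)) :=
  {w | ∃ m n, m % 2 = n % 2 ∧ w = List.replicate m (Sum.inl ()) ++ List.replicate n (Sum.inr ())}

theorem parityWords_eq_inOut_inter_even_length :
    parityWords = InOut Unit Unit ∩ {w | Even w.length} := by
  ext w
  constructor
  · rintro ⟨m, n, h, rfl⟩
    refine ⟨⟨List.replicate m (), List.replicate n (), by simp⟩, ?_⟩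
    simp only [Set.mem_ofPred_eq, List.length_append, List.length_replicate, Nat.even_iff]
    omega
  · rintro ⟨⟨x, y, rfl⟩, heven⟩
    have hunit : ∀ l : List Unit, l = List.replicate l.length () :=
      fun l => List.eq_replicate_iff.2 ⟨rfl, fun _ _ => rfl⟩
    refine ⟨x.length, y.length, ?_, by rw [hunit x, hunit y]; simp⟩
    simp only [Set.mem_ofPred_eq, List.length_append, List.length_map, Nat.even_iff] at heven
    omega

theorem isReg_parityWords : IsReg parityWords := by
  rw [parityWords_eq_inOut_inter_even_length]
  exact (inOutDFA_accepts Unit Unit ▸ isReg_accepts _).inter (isReg_even_length _)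

inductive AbTailState
  | alt
  | altA
  | runA
  | oneB
  | runB
  | dead
  deriving DecidableEq

instance : Fintype AbTailState :=
  ⟨{.alt, .altA, .runA, .oneB, .runB, .dead}, fun s => by cases s <;> simp⟩

def abTailDFA : DFA (Unit ⊕ Unit) AbTailState where
  step
    | .alt, .inl _ => .altA
    | .alt, .inr _ => .oneB
    | .altA, .inl _ => .runA
    | .altA, .inr _ => .alt
    | .runA, .inl _ => .runA
    | .oneB, .inr _ => .runB
    | .runB, .inr _ => .runB
    | _, _ => .dead
  start := .alt
  accept := {.runA, .runB}

def abTailInv : AbTailState → List (Unit ⊕ Unit) → Prop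
  | .alt, w => ∃ n, w = abRep n
  | .altA, w => ∃ n, w = abRep n ++ [Sum.inl ()]
  | .runA, w => ∃ n m, 2 ≤ m ∧ w = abRep n ++ List.replicate m (Sum.inl ())
  | .oneB, w => ∃ n, w = abRep n ++ [Sum.inr ()]
  | .runB, w => ∃ n m, 2 ≤ m ∧ w = abRep n ++ List.replicate m (Sum.inr ())
  | .dead, _ => True

theorem abTailInv_eval (w : List (Unit ⊕ Unit)) : abTailInv (abTailDFA.eval w) w := by
  refine abTailDFA.eval_induction abTailInv ⟨0, rfl⟩ ?_ w
  rintro (_ | _ | _ | _ | _ | _) (⟨⟩ | ⟨⟩) w h <;> simp only [abTailDFA, abTailInv] at h ⊢ <;>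
    try trivial
  · obtain ⟨n, rfl⟩ := h
    exact ⟨n, rfl⟩
  · obtain ⟨n, rfl⟩ := h
    exact ⟨n, rfl⟩
  · obtain ⟨n, rfl⟩ := h
    exact ⟨n, 2, le_rfl, by simp⟩
  · obtain ⟨n, rfl⟩ := h
    exact ⟨n + 1, by simp [abRep_succ']⟩
  · obtain ⟨n, m, hm, rfl⟩ := h
    exact ⟨n, m + 1, by omega, by simp [List.replicate_succ']⟩
  · obtain ⟨n, rfl⟩ := h
    exact ⟨n, 2, le_rfl, by simp⟩
  · obtain ⟨n, m, hm, rfl⟩ := h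
    exact ⟨n, m + 1, by omega, by simp [List.replicate_succ']⟩

theorem abTailDFA_evalFrom_abRep (n : ℕ) :
    abTailDFA.evalFrom abTailDFA.start (abRep n) = .alt := by
  induction n with
  | zero => rfl
  | succ n ih => rw [abRep_succ, DFA.evalFrom_of_append]; exact ih

theorem abTailDFA_accepts : abTailDFA.accepts = abTail := by
  ext w
  refine ⟨fun hw => ?_, ?_⟩
  · have hinv := abTailInv_eval w
    rcases (DFA.mem_accepts _).1 hw with hs | hs <;> rw [hs] at hinv <;>
      obtain ⟨n, m, hm, rfl⟩ := hinv
    · exact ⟨n, m, hm, .inl rfl⟩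
    · exact ⟨n, m, hm, .inr rfl⟩
  · rintro ⟨n, m, hm, rfl | rfl⟩ <;> obtain ⟨m, rfl⟩ := Nat.exists_eq_add_of_le' hm <;>
      rw [DFA.mem_accepts, DFA.eval, DFA.evalFrom_of_append, abTailDFA_evalFrom_abRep]
    · show abTailDFA.evalFrom .runA _ ∈ _
      rw [abTailDFA.evalFrom_replicate_of_step_eq rfl]
      exact .inl rfl
    · show abTailDFA.evalFrom .runB _ ∈ _
      rw [abTailDFA.evalFrom_replicate_of_step_eq rfl]
      exact .inr rfl

theorem isReg_abTail : IsReg abTail :=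
  abTailDFA_accepts ▸ isReg_accepts abTailDFA

theorem replicate_pair_mem_syncRel_abPowers_union_abTail {m n : ℕ} (h : m % 2 = n % 2) :
    (List.replicate m (), List.replicate n ()) ∈ syncRel (abPowers ∪ abTail) := by
  rcases lt_trichotomy m n with hlt | rfl | hgt
  · obtain ⟨d, rfl⟩ := Nat.exists_eq_add_of_lt hlt
    refine ⟨abRep m ++ List.replicate (d + 1) (Sum.inr ()), .inr ⟨m, d + 1, ?_, .inr rfl⟩, ?_⟩
    · omega
    · rw [syncPair_abRep_append_replicate_inr, Nat.add_assoc]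
  · exact ⟨abRep m, .inl ⟨m, rfl⟩, syncPair_abRep m⟩
  · obtain ⟨d, rfl⟩ := Nat.exists_eq_add_of_lt hgt
    refine ⟨abRep n ++ List.replicate (d + 1) (Sum.inl ()), .inr ⟨n, d + 1, ?_, .inl rfl⟩, ?_⟩
    · omega
    · rw [syncPair_abRep_append_replicate_inl, Nat.add_assoc]

theorem syncRel_parityWords_union_abTail :
    syncRel (parityWords ∪ abTail) = syncRel (abPowers ∪ abTail) := by
  apply Set.Subset.antisymm
  · rintro _ ⟨w, ⟨m, n, h, rfl⟩ | hw, rfl⟩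
    · rw [syncPair_replicate_append_replicate]
      exact replicate_pair_mem_syncRel_abPowers_union_abTail h
    · exact Set.mem_image_of_mem _ (.inr hw)
  · rintro _ ⟨w, ⟨n, rfl⟩ | hw, rfl⟩
    · refine ⟨_, .inl ⟨n, n, rfl, rfl⟩, ?_⟩
      rw [syncPair_replicate_append_replicate, syncPair_abRep]
    · exact Set.mem_image_of_mem _ (.inr hw)

/-- for `S = (ab)* + (ab)*(aaa* + bbb*)` and `T = a*b* + (ab)*(aaa* + bbb*)`,
the set `T' = {uv | u ∈ a*, v ∈ b*, |u| ≡ |v| (mod 2)} ∪ (ab)*(aaa* + bbb*)` is a regular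
subset of `T` with `⟦T'⟧ = ⟦S⟧`; in particular `⟦S⟧ ∈ Rel(T)`. -/
theorem stmt7 :
    let a : Unit ⊕ Unit := Sum.inl ()
    let b : Unit ⊕ Unit := Sum.inr ()
    let Ub : Set (List (Unit ⊕ Unit)) :=
      {w | ∃ n m, 2 ≤ m ∧
        (w = abRep n ++ List.replicate m a ∨ w = abRep n ++ List.replicate m b)}
    let S : Set (List (Unit ⊕ Unit)) := {w | ∃ n, w = abRep n} ∪ Ub
    let T : Set (List (Unit ⊕ Unit)) :=
      {w | ∃ m n, w = List.replicate m a ++ List.replicate n b} ∪ Ub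
    let T' : Set (List (Unit ⊕ Unit)) :=
      {w | ∃ m n, m % 2 = n % 2 ∧ w = List.replicate m a ++ List.replicate n b} ∪ Ub
    T' ⊆ T ∧ IsReg T' ∧ syncRel T' = syncRel S ∧ syncRel S ∈ RelOf T := by
  intro a b Ub S T T'
  have hsub : T' ⊆ T := Set.union_subset_union_left Ub fun w ⟨m, n, _, hw⟩ => ⟨m, n, hw⟩
  have hreg : IsReg T' := isReg_parityWords.union isReg_abTail
  have hrel : syncRel T' = syncRel S := syncRel_parityWords_union_abTail
  exact ⟨hsub, hreg, hrel, T', hsub, hreg, hrel⟩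
end
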